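/- For every t ∈ ℂ with t ≠ z_i for all i and t ≠ w_j for all j one has the partial-fraction expansion (1/2)·B(u(t), u(t)) = Σ_{i=1}^N (1/2)·B(λ_i, λ_i)·(t − z_i)^{−2} + Σ_{j=1}^m (1/2)·B(α_j, α_j)·(t − w_j)^{−2} + Σ_{i=1}^N F_i·(t − z_i)^{−1} + Σ_{j=1}^m G_j·(t − w_j)^{−1}. (This is the intermediate identity in the proof of Theorem 4.4, expressing the quadratic form of the Miura connection coefficient with residues given by the partial derivatives ∂Φ/∂z_i = F_i and ∂Φ/∂w_j = G_j of the master function.) -/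

import Mathlib

/-!
Merge the two families of poles into one, `x = Sum.elim z w` with residues `v = Sum.elim (-λ) α`,
so that `u(t) = ∑ₛ (t - xₛ)⁻¹ • vₛ`. Expanding `B(u, u)` gives the double poles from the diagonal,
and each off-diagonal product `(t - xₛ)⁻¹ (t - xₖ)⁻¹` splits by partial fractions into simple
poles at `xₛ` and `xₖ`; by the symmetry of `B` both halves contribute the same residue
`∑_{k ≠ s} B(vₛ, vₖ) / (xₛ - xₖ)`, which at `z_i` is `F_i` and at `w_j` is `G_j`.
-/

open Finset

section

variable {K : Type*} [Field K]

theorem inv_sub_mul_inv_sub {t a b : K} (ha : t ≠ a) (hb : t ≠ b) (hab : a ≠ b) :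
    (t - a)⁻¹ * (t - b)⁻¹ = (a - b)⁻¹ * ((t - a)⁻¹ - (t - b)⁻¹) := by
  field_simp [sub_ne_zero.2 ha, sub_ne_zero.2 hb, sub_ne_zero.2 hab]
  ring

theorem Finset.sum_sum_erase_comm {ι M : Type*} [Fintype ι] [DecidableEq ι] [AddCommMonoid M]
    (f : ι → ι → M) : ∑ i, ∑ k ∈ univ.erase i, f i k = ∑ i, ∑ k ∈ univ.erase i, f k i :=
  Finset.sum_comm' (by simp [and_comm, ne_comm])

theorem Fintype.sum_erase_inl {α β M : Type*} [Fintype α] [Fintype β] [DecidableEq α]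
    [DecidableEq β] [AddCommGroup M] (f : α ⊕ β → M) (a : α) :
    ∑ k ∈ univ.erase (Sum.inl a), f k = ∑ k ∈ univ.erase a, f (Sum.inl k) + ∑ b, f (Sum.inr b) := by
  rw [sum_erase_eq_sub (mem_univ _), sum_erase_eq_sub (mem_univ _), Fintype.sum_sum_type]
  abel

theorem Fintype.sum_erase_inr {α β M : Type*} [Fintype α] [Fintype β] [DecidableEq α]
    [DecidableEq β] [AddCommGroup M] (f : α ⊕ β → M) (b : β) :
    ∑ k ∈ univ.erase (Sum.inr b), f k = ∑ a, f (Sum.inl a) + ∑ k ∈ univ.erase b, f (Sum.inr k) := by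
  rw [sum_erase_eq_sub (mem_univ _), sum_erase_eq_sub (mem_univ _), Fintype.sum_sum_type]
  abel

theorem LinearMap.apply_sum_smul_sum_smul {ι V : Type*} [Fintype ι] [AddCommGroup V] [Module K V]
    (B : V →ₗ[K] V →ₗ[K] K) (c : ι → K) (v : ι → V) :
    B (∑ i, c i • v i) (∑ i, c i • v i) = ∑ i, ∑ k, c i * c k * B (v i) (v k) := by
  simp only [map_sum, map_smul, LinearMap.sum_apply, LinearMap.smul_apply, smul_eq_mul,
    mul_sum]
  rw [sum_comm]
  exact sum_congr rfl fun i _ => sum_congr rfl fun k _ => by ring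

theorem LinearMap.apply_sum_inv_sub_smul_self {ι V : Type*} [Fintype ι] [DecidableEq ι]
    [AddCommGroup V] [Module K V] (B : V →ₗ[K] V →ₗ[K] K) (hB : ∀ x y, B x y = B y x) {x : ι → K}
    (hx : Function.Injective x) {t : K} (ht : ∀ i, t ≠ x i) (v : ι → V) :
    B (∑ i, (t - x i)⁻¹ • v i) (∑ i, (t - x i)⁻¹ • v i)
      = ∑ i, B (v i) (v i) * ((t - x i) ^ 2)⁻¹
        + 2 * ∑ i, (∑ k ∈ univ.erase i, B (v i) (v k) / (x i - x k)) * (t - x i)⁻¹ := by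
  set c : ι → ι → K := fun i k => B (v i) (v k) / (x i - x k)
  have off_diag : ∀ i, ∀ k ∈ univ.erase i, (t - x i)⁻¹ * (t - x k)⁻¹ * B (v i) (v k)
      = c i k * (t - x i)⁻¹ + c k i * (t - x k)⁻¹ := by
    intro i k hk
    have hik : x i ≠ x k := hx.ne (ne_of_mem_erase hk).symm
    simp only [c]
    rw [inv_sub_mul_inv_sub (ht i) (ht k) hik, hB (v k), ← neg_sub (x i) (x k), div_neg]
    ring
  calc B (∑ i, (t - x i)⁻¹ • v i) (∑ i, (t - x i)⁻¹ • v i)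
      = ∑ i, (B (v i) (v i) * ((t - x i) ^ 2)⁻¹
          + ∑ k ∈ univ.erase i, (c i k * (t - x i)⁻¹ + c k i * (t - x k)⁻¹)) := by
        rw [LinearMap.apply_sum_smul_sum_smul]
        refine sum_congr rfl fun i _ => ?_
        rw [← add_sum_erase _ _ (mem_univ i), sum_congr rfl (off_diag i), sq, mul_inv]
        ring
    _ = ∑ i, B (v i) (v i) * ((t - x i) ^ 2)⁻¹
        + (∑ i, ∑ k ∈ univ.erase i, c i k * (t - x i)⁻¹
          + ∑ i, ∑ k ∈ univ.erase i, c k i * (t - x k)⁻¹) := by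
        simp only [sum_add_distrib]
    _ = _ := by
        rw [sum_sum_erase_comm fun i k => c k i * (t - x k)⁻¹]
        simp only [c, sum_mul, two_mul]

end

/-- The intermediate partial-fraction identity in the proof of
Theorem 4.4, expressing the quadratic form `½·B(u(t),u(t))` of the Miura
connection coefficient with residues given by the partial derivatives
`∂Φ/∂z_i = F_i` and `∂Φ/∂w_j = G_j` of the master function. -/
theorem statement8 {V : Type*} [AddCommGroup V] [Module ℂ V]
    (B : V →ₗ[ℂ] V →ₗ[ℂ] ℂ) (hBsymm : ∀ x y, B x y = B y x)
    (N m : ℕ) (lam : Fin N → V) (alp : Fin m → V)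
    (z : Fin N → ℂ) (w : Fin m → ℂ)
    (hz : Function.Injective z) (hw : Function.Injective w)
    (hzw : ∀ i j, z i ≠ w j)
    (u : ℂ → V)
    (hu : ∀ t, u t = -∑ i, (t - z i)⁻¹ • lam i + ∑ j, (t - w j)⁻¹ • alp j)
    (F : Fin N → ℂ)
    (hF : ∀ i, F i = ∑ k ∈ univ.erase i, B (lam i) (lam k) / (z i - z k)
        - ∑ j, B (lam i) (alp j) / (z i - w j))
    (G : Fin m → ℂ)
    (hG : ∀ j, G j = -∑ i, B (lam i) (alp j) / (w j - z i)
        + ∑ k ∈ univ.erase j, B (alp k) (alp j) / (w j - w k)) :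
    ∀ t : ℂ, (∀ i, t ≠ z i) → (∀ j, t ≠ w j) →
      (1/2 : ℂ) * B (u t) (u t)
        = ∑ i, (1/2 : ℂ) * B (lam i) (lam i) * ((t - z i) ^ 2)⁻¹
          + ∑ j, (1/2 : ℂ) * B (alp j) (alp j) * ((t - w j) ^ 2)⁻¹
          + ∑ i, F i * (t - z i)⁻¹
          + ∑ j, G j * (t - w j)⁻¹ := by
  intro t htz htw
  let x : Fin N ⊕ Fin m → ℂ := Sum.elim z w
  let v : Fin N ⊕ Fin m → V := Sum.elim (-lam) alp
  have hux : u t = ∑ s, (t - x s)⁻¹ • v s := by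
    simp [hu, x, v, Fintype.sum_sum_type, sum_neg_distrib]
  have hF_res : ∀ i, F i
      = ∑ k ∈ univ.erase (Sum.inl i), B (v (Sum.inl i)) (v k) / (x (Sum.inl i) - x k) := by
    intro i
    rw [Fintype.sum_erase_inl, hF]
    simp only [x, v, Sum.elim_inl, Sum.elim_inr, Pi.neg_apply, map_neg, LinearMap.neg_apply,
      neg_neg, neg_div, sum_neg_distrib, sub_eq_add_neg]
  have hG_res : ∀ j, G j
      = ∑ k ∈ univ.erase (Sum.inr j), B (v (Sum.inr j)) (v k) / (x (Sum.inr j) - x k) := by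
    intro j
    rw [Fintype.sum_erase_inr, hG]
    simp only [x, v, Sum.elim_inl, Sum.elim_inr, Pi.neg_apply, map_neg, neg_div, sum_neg_distrib,
      hBsymm (lam _) (alp j), hBsymm (alp _) (alp j)]
  have ht : ∀ s, t ≠ x s := by
    rintro (i | j)
    exacts [htz i, htw j]
  rw [hux, LinearMap.apply_sum_inv_sub_smul_self B hBsymm (hz.sumElim hw hzw) ht v, mul_add,
    ← mul_assoc, one_div_mul_cancel two_ne_zero, one_mul, mul_sum, Fintype.sum_sum_type,
    Fintype.sum_sum_type]
  simp only [hF_res, hG_res, v, x, Sum.elim_inl, Sum.elim_inr, Pi.neg_apply, map_neg,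
    LinearMap.neg_apply, neg_neg, mul_assoc, add_assoc]
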